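/- With balanced classes, if Σ_1 is block-diagonal with blocks αI_q and δI_{p-q} (0 < δ < α) and Σ_2 = αI_p, then the PCA projection W (onto the top-q eigenvectors of Σ_1 + Σ_2, i.e. the first q coordinates) yields identical embedded distributions N(0, αI_q) for both classes, so the embedded Bayes risk equals 1/2. -/

import Mathlib

open Matrix MeasureTheory

/-- Density of the multivariate Gaussian `N(m, S)` on `ℝ^q`. -/
noncomputable def gaussPdf {q : ℕ} (m : Fin q → ℝ) (S : Matrix (Fin q) (Fin q) ℝ)
    (v : Fin q → ℝ) : ℝ :=
  (2 * Real.pi) ^ (-(q : ℝ) / 2) * S.det ^ (-(1 : ℝ) / 2) *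
    Real.exp (-(1 / 2) * ((v - m) ⬝ᵥ S⁻¹.mulVec (v - m)))

/-! Both embedded covariances are `α • 1`, so the two class densities coincide, the minimum in
the Bayes risk is `½ f` for a single Gaussian density `f`, and the risk is `½ ∫ f = ½`. The
integral of `f` is computed by factoring it into a product of one-dimensional Gaussian
densities. -/

open ProbabilityTheory

theorem Matrix.transpose_mul_mul_one_submatrix {R m n : Type*} [Fintype m] [DecidableEq m]
    [NonAssocSemiring R] (e : n → m) (A : Matrix m m R) :
    ((1 : Matrix m m R).submatrix id e)ᵀ * A * (1 : Matrix m m R).submatrix id e =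
      A.submatrix e e := by
  rw [transpose_submatrix, transpose_one]
  have h_left := one_submatrix_mul e (Equiv.refl m) A
  have h_right := mul_submatrix_one (Equiv.refl m) e (A.submatrix e id)
  simp only [Equiv.coe_refl, Equiv.refl_symm, Function.id_comp] at h_left h_right
  rw [h_left, h_right, submatrix_submatrix]
  rfl

theorem Matrix.diagonal_submatrix_eq_smul_one {R m n : Type*} [DecidableEq m] [DecidableEq n]
    [Semiring R] {d : m → R} {e : n → m} (he : Function.Injective e) {a : R}
    (hd : ∀ j, d (e j) = a) :
    (diagonal d).submatrix e e = a • (1 : Matrix n n R) := by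
  rw [submatrix_diagonal d e he, smul_one_eq_diagonal]
  exact congrArg diagonal (funext hd)

theorem Real.rpow_neg_half_mul_pow_rpow_neg_half {x y : ℝ} (hx : 0 < x) (hy : 0 < y) (q : ℕ) :
    x ^ (-(q : ℝ) / 2) * (y ^ q) ^ (-(1 : ℝ) / 2) = (√(x * y))⁻¹ ^ q := by
  rw [← Real.rpow_natCast y q, ← Real.rpow_mul hy.le, Real.sqrt_eq_rpow,
    ← Real.rpow_neg (by positivity), Real.mul_rpow hx.le hy.le, mul_pow,
    ← Real.rpow_mul_natCast hx.le, ← Real.rpow_mul_natCast hy.le]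
  ring_nf

theorem gaussPdf_zero_smul_one {q : ℕ} {α : ℝ} (hα : 0 < α) (v : Fin q → ℝ) :
    gaussPdf 0 (α • (1 : Matrix (Fin q) (Fin q) ℝ)) v =
      ∏ i, gaussianPDFReal 0 α.toNNReal (v i) := by
  have hinv : (α • (1 : Matrix (Fin q) (Fin q) ℝ))⁻¹ = α⁻¹ • 1 := by
    refine inv_eq_right_inv ?_
    rw [smul_mul_smul_comm, mul_inv_cancel₀ hα.ne', Matrix.mul_one, one_smul]
  simp only [gaussianPDFReal, Finset.prod_mul_distrib, Finset.prod_const, Finset.card_univ,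
    Fintype.card_fin, ← Real.exp_sum, gaussPdf, hinv, det_smul, det_one, mul_one,
    Real.coe_toNNReal _ hα.le, sub_zero]
  rw [Real.rpow_neg_half_mul_pow_rpow_neg_half Real.two_pi_pos hα]
  congr 2
  simp only [smul_mulVec, one_mulVec, dotProduct, Pi.smul_apply, smul_eq_mul, Finset.mul_sum]
  refine Finset.sum_congr rfl fun i _ => ?_
  field_simp

theorem integral_gaussPdf_zero_smul_one {q : ℕ} {α : ℝ} (hα : 0 < α) :
    ∫ v, gaussPdf 0 (α • (1 : Matrix (Fin q) (Fin q) ℝ)) v = 1 := by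
  simp only [gaussPdf_zero_smul_one hα]
  rw [integral_fintype_prod_volume_eq_pow,
    integral_gaussianPDFReal_eq_one _ (by simpa using hα), one_pow]

theorem embedded_bayes_risk_example_no_upper_bound_general
    {p q : ℕ} (hq : 2 * q ≤ p) (α δ : ℝ) (hδ : 0 < δ) (hδα : δ < α)
    (S1 : Matrix (Fin p) (Fin p) ℝ)
    (hS1 : S1 = Matrix.of fun i j : Fin p =>
      if i = j then (if (i : ℕ) < q then α else δ) else 0)
    (S2 : Matrix (Fin p) (Fin p) ℝ)
    (hS2 : S2 = α • (1 : Matrix (Fin p) (Fin p) ℝ))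
    (W : Matrix (Fin p) (Fin q) ℝ)
    (hW : W = Matrix.of fun (i : Fin p) (j : Fin q) =>
      if (i : ℕ) = (j : ℕ) then (1 : ℝ) else 0) :
    Wᵀ * S1 * W = α • (1 : Matrix (Fin q) (Fin q) ℝ)
    ∧ Wᵀ * S2 * W = α • (1 : Matrix (Fin q) (Fin q) ℝ)
    ∧ ∫ v, min ((1 / 2 : ℝ) * gaussPdf 0 (Wᵀ * S1 * W) v)
        ((1 / 2 : ℝ) * gaussPdf 0 (Wᵀ * S2 * W) v) = 1 / 2 := by
  have hα : 0 < α := hδ.trans hδα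
  have hqp : q ≤ p := by omega
  have hW' : W = (1 : Matrix (Fin p) (Fin p) ℝ).submatrix id (Fin.castLE hqp) := by
    ext i j
    simp [hW, one_apply, Fin.ext_iff]
  have hS1' : S1 = diagonal fun i : Fin p => if (i : ℕ) < q then α else δ := by
    ext i j
    simp [hS1, diagonal_apply]
  have h1 : Wᵀ * S1 * W = α • (1 : Matrix (Fin q) (Fin q) ℝ) := by
    rw [hW', hS1', transpose_mul_mul_one_submatrix]
    exact diagonal_submatrix_eq_smul_one (Fin.castLE_injective hqp) fun j => if_pos j.isLt
  have h2 : Wᵀ * S2 * W = α • (1 : Matrix (Fin q) (Fin q) ℝ) := by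
    rw [hW', hS2, smul_one_eq_diagonal, transpose_mul_mul_one_submatrix]
    exact diagonal_submatrix_eq_smul_one (Fin.castLE_injective hqp) fun _ => rfl
  refine ⟨h1, h2, ?_⟩
  simp only [h1, h2, min_self]
  rw [integral_const_mul, integral_gaussPdf_zero_smul_one hα, mul_one]

/-- Example 2 of the paper: with `S1 = diag(αI_q, δI_{p-q})`, `S2 = αI_p` and
the PCA projection `W` onto the first `q` coordinates, the two embedded
distributions coincide (`N(0, αI_q)`), so the embedded Bayes risk equals
`1/2`. -/
theorem embedded_bayes_risk_example_no_upper_bound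
    {p q : ℕ} (hq0 : 0 < q) (hq : 2 * q ≤ p) (α δ : ℝ) (hδ : 0 < δ) (hδα : δ < α)
    (S1 : Matrix (Fin p) (Fin p) ℝ)
    (hS1 : S1 = Matrix.of fun i j : Fin p =>
      if i = j then (if (i : ℕ) < q then α else δ) else 0)
    (S2 : Matrix (Fin p) (Fin p) ℝ)
    (hS2 : S2 = α • (1 : Matrix (Fin p) (Fin p) ℝ))
    (W : Matrix (Fin p) (Fin q) ℝ)
    (hW : W = Matrix.of fun (i : Fin p) (j : Fin q) =>
      if (i : ℕ) = (j : ℕ) then (1 : ℝ) else 0) :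
    Wᵀ * S1 * W = α • (1 : Matrix (Fin q) (Fin q) ℝ)
    ∧ Wᵀ * S2 * W = α • (1 : Matrix (Fin q) (Fin q) ℝ)
    ∧ ∫ v, min ((1 / 2 : ℝ) * gaussPdf 0 (Wᵀ * S1 * W) v)
        ((1 / 2 : ℝ) * gaussPdf 0 (Wᵀ * S2 * W) v) = 1 / 2 :=
  embedded_bayes_risk_example_no_upper_bound_general hq α δ hδ hδα S1 hS1 S2 hS2 W hW
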